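/- arXiv:1304.3836 — 2 statements merged into one kernel-verified Lean document; each statement's English description precedes it below -/
import Mathlib

section
/- The abelian Lie subalgebra H_n spanned by x_1∂_1, ..., x_n∂_n is a Cartan subalgebra of D_n = Der_K(P_n), i.e. H_n is nilpotent and equals its own normalizer in D_n. -/
/-!
Write `Eᵢ = xᵢ∂ᵢ`. A derivation of `R[x_σ]` is determined by its values on the variables, so the
span of the `Eᵢ` is the Lie subalgebra of derivations `d` with `d xⱼ ∈ R xⱼ` for all `j`, and any two
of these commute because they commute on each `xⱼ`. If `d` normalizes it, then `⁅d, Eᵢ⁆ xⱼ ∈ R xⱼ`.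
Since `Eᵢ` multiplies the monomial `xᵐ` by `mᵢ`, the coefficient of `xᵐ` in `⁅d, Eᵢ⁆ xⱼ` is
`(δᵢⱼ - mᵢ)` times that in `d xⱼ`; for `m ≠ eⱼ` some `i` has `mᵢ ≠ δᵢⱼ`, so in characteristic zero
`d xⱼ` is a multiple of `xⱼ`.
-/

open MvPolynomial

namespace MvPolynomial

variable {σ R : Type*} [CommRing R]

theorem coeff_X_mul_pderiv (i : σ) (m : σ →₀ ℕ) (f : MvPolynomial σ R) :
    coeff m (X i * pderiv i f) = m i * coeff m f := by
  induction f using MvPolynomial.induction_on' with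
  | add p q hp hq => rw [map_add, mul_add, coeff_add, hp, hq, coeff_add, mul_add]
  | monomial s a =>
    classical
    rw [X_mul_pderiv_monomial, coeff_smul, coeff_monomial]
    split_ifs with h
    · rw [h, nsmul_eq_mul]
    · rw [smul_zero, mul_zero]

theorem X_smul_pderiv_apply_X (i j : σ) :
    ((X i : MvPolynomial σ R) • pderiv i) (X j) =
      ((Finsupp.single j 1 i : ℕ) : R) • (X j : MvPolynomial σ R) := by
  rcases eq_or_ne i j with rfl | h
  · simp
  · simp [pderiv_X_of_ne h.symm, Finsupp.single_eq_of_ne h]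

theorem coeff_lie_X_smul_pderiv_apply_X
    (d : Derivation R (MvPolynomial σ R) (MvPolynomial σ R)) (i j : σ) (m : σ →₀ ℕ) :
    coeff m (⁅d, (X i : MvPolynomial σ R) • pderiv i⁆ (X j)) =
      ((Finsupp.single j 1 i : ℕ) - m i : R) * coeff m (d (X j)) := by
  rw [Derivation.commutator_apply, X_smul_pderiv_apply_X, Derivation.map_smul, coeff_sub,
    Derivation.smul_apply, smul_eq_mul, coeff_X_mul_pderiv, coeff_smul, smul_eq_mul, sub_mul]

theorem lie_apply_X_eq_zero {d e : Derivation R (MvPolynomial σ R) (MvPolynomial σ R)} {j : σ}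
    {c c' : R} (hd : d (X j) = c • X j) (he : e (X j) = c' • X j) : ⁅d, e⁆ (X j) = 0 := by
  rw [Derivation.commutator_apply, he, hd, Derivation.map_smul, Derivation.map_smul, hd, he,
    smul_smul, smul_smul, mul_comm, sub_self]

variable (σ R) in
def diagonalDerivations : LieSubalgebra R (Derivation R (MvPolynomial σ R) (MvPolynomial σ R)) where
  carrier := {d | ∀ j, ∃ c : R, d (X j) = c • X j}
  add_mem' := by
    rintro d e hd he j
    obtain ⟨c, hc⟩ := hd j
    obtain ⟨c', hc'⟩ := he j
    exact ⟨c + c', by rw [Derivation.add_apply, hc, hc', add_smul]⟩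
  zero_mem' j := ⟨0, by rw [Derivation.zero_apply, zero_smul]⟩
  smul_mem' := by
    rintro t d hd j
    obtain ⟨c, hc⟩ := hd j
    exact ⟨t * c, by rw [Derivation.smul_apply, hc, smul_smul]⟩
  lie_mem' := by
    rintro d e hd he j
    obtain ⟨c, hc⟩ := hd j
    obtain ⟨c', hc'⟩ := he j
    exact ⟨0, by rw [lie_apply_X_eq_zero hc hc', zero_smul]⟩

theorem X_smul_pderiv_mem_diagonalDerivations (i : σ) :
    (X i : MvPolynomial σ R) • pderiv i ∈ diagonalDerivations σ R :=
  fun j => ⟨_, X_smul_pderiv_apply_X i j⟩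

instance : IsLieAbelian (diagonalDerivations σ R) where
  trivial d e := Subtype.ext <| derivation_ext fun j => by
    obtain ⟨c, hc⟩ := d.2 j
    obtain ⟨c', hc'⟩ := e.2 j
    exact (lie_apply_X_eq_zero hc hc').trans (Derivation.zero_apply _).symm

theorem lieSpan_X_smul_pderiv [Fintype σ] :
    LieSubalgebra.lieSpan R _ {d | ∃ i : σ, d = (X i : MvPolynomial σ R) • pderiv i} =
      diagonalDerivations σ R := by
  refine le_antisymm (LieSubalgebra.lieSpan_le.mpr ?_) fun d hd => ?_
  · rintro d ⟨i, rfl⟩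
    exact X_smul_pderiv_mem_diagonalDerivations i
  choose c hc using hd
  have hd : ∑ i, c i • ((X i : MvPolynomial σ R) • pderiv i) = d := derivation_ext fun j => by
    rw [hc, ← Derivation.coeFnAddMonoidHom_apply, map_sum, Finset.sum_apply]
    have hterm (i : σ) : (c i • ((X i : MvPolynomial σ R) • pderiv i)) (X j) =
        (c i * (Finsupp.single j 1 i : ℕ)) • (X j : MvPolynomial σ R) := by
      rw [Derivation.smul_apply, X_smul_pderiv_apply_X, smul_smul]
    simp only [Derivation.coeFnAddMonoidHom_apply, hterm, ← Finset.sum_smul]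
    rw [Finset.sum_eq_single_of_mem j (Finset.mem_univ j) fun i _ hij => by
      rw [Finsupp.single_eq_of_ne hij, Nat.cast_zero, mul_zero], Finsupp.single_eq_same,
      Nat.cast_one, mul_one]
  rw [← hd]
  exact sum_mem fun i _ => LieSubalgebra.smul_mem _ _ (LieSubalgebra.subset_lieSpan ⟨i, rfl⟩)

variable [NoZeroDivisors R] [CharZero R]

theorem apply_X_eq_smul_X_of_mem_normalizer
    {d : Derivation R (MvPolynomial σ R) (MvPolynomial σ R)}
    (hd : d ∈ (diagonalDerivations σ R).normalizer) (j : σ) :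
    d (X j) = coeff (Finsupp.single j 1) (d (X j)) • X j := by
  classical
  ext m
  rw [coeff_smul, coeff_X, smul_eq_mul]
  split_ifs with hm
  · rw [hm, mul_one]
  rw [mul_zero]
  obtain ⟨i, hi⟩ : ∃ i, m i ≠ Finsupp.single j 1 i := by
    by_contra! h
    exact hm (Finsupp.ext h).symm
  obtain ⟨c, hc⟩ := (LieSubalgebra.mem_normalizer_iff _ _).mp hd _
    (X_smul_pderiv_mem_diagonalDerivations i) j
  have h := congrArg (coeff m) hc
  rw [coeff_lie_X_smul_pderiv_apply_X, coeff_smul, coeff_X, if_neg hm, smul_zero] at h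
  exact (mul_eq_zero.mp h).resolve_left (sub_ne_zero.mpr (mod_cast hi.symm))

theorem normalizer_diagonalDerivations :
    (diagonalDerivations σ R).normalizer = diagonalDerivations σ R :=
  le_antisymm (fun _ hd j => ⟨_, apply_X_eq_smul_X_of_mem_normalizer hd j⟩)
    (LieSubalgebra.le_normalizer _)

end MvPolynomial

/-- The Lie subalgebra H_n of D_n = Der_K(P_n) spanned by x_1∂_1, ..., x_n∂_n is a
Cartan subalgebra: it is nilpotent and equals its own normalizer. -/
theorem cartan_subalgebra (n : ℕ) (K : Type*) [Field K] [CharZero K]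
    (H : LieSubalgebra K (Derivation K (MvPolynomial (Fin n) K) (MvPolynomial (Fin n) K)))
    (hH : H = LieSubalgebra.lieSpan K _
      {d | ∃ i : Fin n, d = (X i : MvPolynomial (Fin n) K) • pderiv i}) :
    LieRing.IsNilpotent H ∧ H.normalizer = H := by
  rw [hH, lieSpan_X_smul_pderiv]
  exact ⟨inferInstance, normalizer_diagonalDerivations⟩
end

section
/- The abelian subalgebra D_n^0 = ⊕_{i=1}^n K∂_i equals its own centralizer in the Lie algebra D_n = Der_K(P_n); in particular it is a maximal abelian Lie subalgebra. -/
/-!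
A derivation `D` of `K[x₁, …, xₙ]` commuting with every `∂ᵢ` satisfies
`∂ᵢ (D xⱼ) = D (∂ᵢ xⱼ) = 0`, since `∂ᵢ xⱼ` is a constant. In characteristic zero a polynomial
killed by all `∂ᵢ` is constant, so `D = ∑ⱼ D(xⱼ) ∂ⱼ` has constant coefficients. Conversely
the `∂ᵢ` commute pairwise, so their span is abelian and hence lies in its own centralizer;
maximality among abelian subspaces follows at once.
-/

open MvPolynomial

section LieAlgebra

variable {R L : Type*} [CommRing R] [LieRing L] [LieAlgebra R L]

theorem lie_eq_zero_forall_mem_span_iff {s : Set L} {x : L} :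
    (∀ y ∈ Submodule.span R s, ⁅x, y⁆ = 0) ↔ ∀ y ∈ s, ⁅x, y⁆ = 0 :=
  ⟨fun h y hy => h y (Submodule.subset_span hy),
    fun h _ hy => (Submodule.span_le (p := LinearMap.ker (LieAlgebra.ad R L x))).2 h hy⟩

theorem lie_eq_zero_of_mem_span {s : Set L} (hs : ∀ a ∈ s, ∀ b ∈ s, ⁅a, b⁆ = 0) {x y : L}
    (hx : x ∈ Submodule.span R s) (hy : y ∈ Submodule.span R s) : ⁅x, y⁆ = 0 := by
  refine lie_eq_zero_forall_mem_span_iff.2 (fun b hb => ?_) y hy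
  rw [← lie_skew, neg_eq_zero]
  exact lie_eq_zero_forall_mem_span_iff.2 (hs b hb) x hx

end LieAlgebra

namespace MvPolynomial

variable {σ R : Type*}

theorem eq_C_of_forall_pderiv_eq_zero [CommSemiring R] [IsAddTorsionFree R]
    {p : MvPolynomial σ R} (h : ∀ i, pderiv i p = 0) : p = C (coeff 0 p) := by
  classical
  ext m
  rw [coeff_C]
  split_ifs with hm
  · rw [hm]
  obtain ⟨i, hi⟩ : ∃ i, m i ≠ 0 := by
    by_contra! h0
    exact hm (Finsupp.ext h0).symm
  have hcoeff := coeff_pderiv (i := i) p (m - Finsupp.single i 1)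
  rw [h i, coeff_zero, Finsupp.sub_add_single_one_cancel hi, ← Nat.cast_succ, mul_comm,
    ← nsmul_eq_mul, eq_comm, nsmul_eq_zero_iff] at hcoeff
  exact hcoeff.resolve_right (Nat.succ_ne_zero _)

section Derivation

variable [CommRing R]

theorem pderiv_lie_pderiv (i j : σ) : ⁅pderiv (R := R) i, pderiv (R := R) j⁆ = 0 := by
  classical
  refine derivation_ext fun k => ?_
  simp [Derivation.commutator_apply, pderiv_X, Pi.single_apply, apply_ite]

theorem pderiv_apply_X_eq_zero_of_lie_pderiv_eq_zero
    {D : Derivation R (MvPolynomial σ R) (MvPolynomial σ R)} {i : σ}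
    (h : ⁅D, pderiv (R := R) i⁆ = 0) (j : σ) : pderiv i (D (X j)) = 0 := by
  classical
  have := congr($h (X j))
  simpa [Derivation.commutator_apply, pderiv_X, Pi.single_apply, apply_ite] using this

theorem derivation_eq_sum_smul_pderiv [Fintype σ]
    (D : Derivation R (MvPolynomial σ R) (MvPolynomial σ R)) :
    D = ∑ i, D (X i) • pderiv i := by
  classical
  refine derivation_ext fun k => ?_
  conv_rhs => rw [← Derivation.coeFnAddMonoidHom_apply, map_sum, Finset.sum_apply]
  simp [pderiv_X, Pi.single_apply]

theorem mem_span_pderiv_of_forall_lie_pderiv_eq_zero [Fintype σ] [IsAddTorsionFree R]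
    {D : Derivation R (MvPolynomial σ R) (MvPolynomial σ R)}
    (h : ∀ i : σ, ⁅D, pderiv (R := R) i⁆ = 0) :
    D ∈ Submodule.span R (Set.range (pderiv (σ := σ) (R := R))) := by
  have hconst (j : σ) : D (X j) = C (coeff 0 (D (X j))) :=
    eq_C_of_forall_pderiv_eq_zero fun i => pderiv_apply_X_eq_zero_of_lie_pderiv_eq_zero (h i) j
  rw [derivation_eq_sum_smul_pderiv D]
  refine Submodule.sum_mem _ fun j _ => ?_
  rw [hconst j, ← algebraMap_eq, algebraMap_smul]
  exact Submodule.smul_mem _ _ (Submodule.subset_span ⟨j, rfl⟩)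

theorem forall_lie_eq_zero_iff_mem_span_pderiv [Fintype σ] [IsAddTorsionFree R]
    {D : Derivation R (MvPolynomial σ R) (MvPolynomial σ R)} :
    (∀ E ∈ Submodule.span R (Set.range (pderiv (σ := σ) (R := R))), ⁅D, E⁆ = 0) ↔
      D ∈ Submodule.span R (Set.range (pderiv (σ := σ) (R := R))) := by
  rw [lie_eq_zero_forall_mem_span_iff, Set.forall_mem_range]
  refine ⟨mem_span_pderiv_of_forall_lie_pderiv_eq_zero, fun hD i => ?_⟩
  refine lie_eq_zero_of_mem_span ?_ hD (Submodule.subset_span ⟨i, rfl⟩)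
  rintro _ ⟨i, rfl⟩ _ ⟨j, rfl⟩
  exact pderiv_lie_pderiv i j

end Derivation

end MvPolynomial

/-- The abelian subalgebra D_n^0 = ⊕ K∂_i equals its own centralizer in D_n = Der_K(P_n);
in particular it is a maximal abelian Lie subalgebra. -/
theorem const_derivations_eq_centralizer (n : ℕ) (K : Type*) [Field K] [CharZero K]
    (D0 : Submodule K (Derivation K (MvPolynomial (Fin n) K) (MvPolynomial (Fin n) K)))
    (hD0 : D0 = Submodule.span K {d | ∃ i : Fin n,
      d = (pderiv i : Derivation K (MvPolynomial (Fin n) K) (MvPolynomial (Fin n) K))}) :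
    {d : Derivation K (MvPolynomial (Fin n) K) (MvPolynomial (Fin n) K) |
        ∀ e ∈ D0, ⁅d, e⁆ = 0} = (D0 : Set _) ∧
    ∀ A : Submodule K (Derivation K (MvPolynomial (Fin n) K) (MvPolynomial (Fin n) K)),
      D0 ≤ A → (∀ x ∈ A, ∀ y ∈ A, ⁅x, y⁆ = 0) → A = D0 := by
  have hcentralizer (d : Derivation K (MvPolynomial (Fin n) K) (MvPolynomial (Fin n) K)) :
      (∀ e ∈ D0, ⁅d, e⁆ = 0) ↔ d ∈ D0 := by
    have hrange : {d | ∃ i : Fin n, d = pderiv (R := K) i} = Set.range pderiv :=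
      Set.ext fun _ => exists_congr fun _ => eq_comm
    rw [hD0, hrange]
    exact forall_lie_eq_zero_iff_mem_span_pderiv
  refine ⟨Set.ext hcentralizer, fun A hD0A habelian => le_antisymm ?_ hD0A⟩
  exact fun a ha => (hcentralizer a).1 fun e he => habelian a ha e (hD0A he)
end
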